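/- Let A ⊆ ℝ² be a measurable set with Lebesgue measure 0 < |A| < ∞, let x : ℝ² → ℝ^k be a bounded measurable covariate map, fix β ∈ ℝ^{k+1} and set λ_β(y) = exp(β_0 + Σ_{j=1}^k x_j(y) β_j). Fix presence points y_1, …, y_n ∈ A and let Y_{n+1}, Y_{n+2}, … be i.i.d. random points uniformly distributed on A. For j ∈ {0, 1, …, k} (with x_0 ≡ 1) define the discretized score S_j^{(m)} = Σ_{i=1}^n x_j(y_i) − (|A|/m)·( Σ_{i=1}^n x_j(y_i) λ_β(y_i) + Σ_{i=n+1}^m x_j(Y_i) λ_β(Y_i) ). Then as m → ∞, S_j^{(m)} converges in probability to Σ_{i=1}^n x_j(y_i) − ∫_A x_j(y) λ_β(y) dy, the j-th score of the continuous Poisson point-process log-likelihood l(β) = Σ_{i=1}^n log λ_β(y_i) − ∫_A λ_β(y) dy. -/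

import Mathlib

open Real Finset Filter MeasureTheory ProbabilityTheory Topology

noncomputable section

/-- Extended covariate maps: `x_0 ≡ 1` together with `x_1, …, x_k`. -/
def xec {k : ℕ} (x : ℝ × ℝ → Fin k → ℝ) (j : Fin (k + 1)) (y : ℝ × ℝ) : ℝ :=
  (Fin.cons (1 : ℝ) (x y) : Fin (k + 1) → ℝ) j

/-- The intensity `λ_β(y) = exp(β_0 + Σ_{j=1}^k x_j(y) β_j)`. -/
def lamc {k : ℕ} (x : ℝ × ℝ → Fin k → ℝ) (β : Fin (k + 1) → ℝ) (y : ℝ × ℝ) : ℝ :=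
  Real.exp (β 0 + ∑ j : Fin k, x y j * β j.succ)

/-- The uniform distribution on a set `A ⊆ ℝ²`: the probability measure
proportional to Lebesgue measure restricted to `A`. -/
def unifOn (A : Set (ℝ × ℝ)) : Measure (ℝ × ℝ) :=
  (volume A)⁻¹ • volume.restrict A

/-!
The Monte Carlo part `(|A|/m) Σ_{i=n+1}^m x_j(Y_i) λ_β(Y_i)` is `|A|` times an empirical mean
of i.i.d. bounded variables with mean `|A|⁻¹ ∫_A x_j λ_β`, so the strong law of large numbers
makes it converge almost surely to `∫_A x_j λ_β`. The `n` fixed terms carry the weight `|A|/m`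
and vanish in the limit. Almost sure convergence implies convergence in probability.
-/

theorem tendsto_const_add_sum_Ico_div {a : ℕ → ℝ} {L : ℝ} (D : ℝ) (n : ℕ)
    (h : Tendsto (fun m : ℕ => (∑ i ∈ range m, a i) / m) atTop (𝓝 L)) :
    Tendsto (fun m : ℕ => (D + ∑ i ∈ Ico n m, a i) / m) atTop (𝓝 L) := by
  have hvanish : Tendsto (fun m : ℕ => (D - ∑ i ∈ range n, a i) / m) atTop (𝓝 0) :=
    tendsto_const_div_atTop_nhds_zero_nat _
  have hsum := h.add hvanish
  rw [add_zero] at hsum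
  refine hsum.congr' ?_
  filter_upwards [eventually_ge_atTop n] with m hm
  rw [sum_Ico_eq_sub _ hm]
  ring

theorem ae_tendsto_sum_comp_div_of_iIndepFun {Ω E : Type*} [MeasurableSpace Ω]
    [MeasurableSpace E] {μ : Measure Ω} {ν : Measure E} {Y : ℕ → Ω → E}
    (hY : ∀ i, Measurable (Y i)) (hindep : iIndepFun Y μ) (hident : ∀ i, μ.map (Y i) = ν)
    {f : E → ℝ} (hf : Measurable f) (hfi : Integrable f ν) :
    ∀ᵐ ω ∂μ, Tendsto (fun m : ℕ => (∑ i ∈ range m, f (Y i ω)) / m) atTop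
      (𝓝 (∫ z, f z ∂ν)) := by
  have hint : Integrable (fun ω => f (Y 0 ω)) μ :=
    (integrable_map_measure hf.aestronglyMeasurable (hY 0).aemeasurable).1 (hident 0 ▸ hfi)
  have hmean : ∫ ω, f (Y 0 ω) ∂μ = ∫ z, f z ∂ν := by
    rw [← hident 0, integral_map (hY 0).aemeasurable hf.aestronglyMeasurable]
  rw [← hmean]
  refine strong_law_ae_real (fun i ω => f (Y i ω)) hint
    (fun i i' hii' => (hindep.indepFun hii').comp hf hf) fun i => ?_
  exact (IdentDistrib.mk (hY i).aemeasurable (hY 0).aemeasurable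
    (by rw [hident i, hident 0])).comp hf

instance (A : Set (ℝ × ℝ)) : IsZeroOrProbabilityMeasure (unifOn A) :=
  inferInstanceAs (IsZeroOrProbabilityMeasure volume[|A])

theorem integral_unifOn (A : Set (ℝ × ℝ)) (f : ℝ × ℝ → ℝ) :
    ∫ z, f z ∂unifOn A = (volume A).toReal⁻¹ * ∫ z in A, f z := by
  rw [unifOn, integral_smul_measure, ENNReal.toReal_inv, smul_eq_mul]

section Covariates

variable {k : ℕ} (x : ℝ × ℝ → Fin k → ℝ) {M : ℝ}

theorem measurable_xec (hxm : Measurable x) (j : Fin (k + 1)) : Measurable (xec x j) := by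
  induction j using Fin.cases with
  | zero => unfold xec; simp only [Fin.cons_zero]; exact measurable_const
  | succ i => unfold xec; simp only [Fin.cons_succ]; exact (measurable_pi_apply i).comp hxm

theorem measurable_lamc (hxm : Measurable x) (β : Fin (k + 1) → ℝ) : Measurable (lamc x β) :=
  (measurable_const.add (Finset.measurable_sum _ fun i _ =>
    ((measurable_pi_apply i).comp hxm).mul measurable_const)).exp

theorem lamc_pos (β : Fin (k + 1) → ℝ) (z : ℝ × ℝ) : 0 < lamc x β z := Real.exp_pos _

theorem abs_xec_le (hbd : ∀ y, ‖x y‖ ≤ M) (j : Fin (k + 1)) (z : ℝ × ℝ) :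
    |xec x j z| ≤ max 1 M := by
  induction j using Fin.cases with
  | zero => simp [xec]
  | succ i =>
    simpa [xec] using ((norm_le_pi_norm (x z) i).trans (hbd z)).trans (le_max_right _ _)

theorem lamc_le (hbd : ∀ y, ‖x y‖ ≤ M) (β : Fin (k + 1) → ℝ) (z : ℝ × ℝ) :
    lamc x β z ≤ Real.exp (|β 0| + ∑ i : Fin k, M * |β i.succ|) := by
  refine Real.exp_le_exp.2 (add_le_add (le_abs_self _) (sum_le_sum fun i _ => ?_))
  calc x z i * β i.succ ≤ |x z i| * |β i.succ| := by rw [← abs_mul]; exact le_abs_self _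
    _ ≤ M * |β i.succ| :=
      mul_le_mul_of_nonneg_right ((norm_le_pi_norm (x z) i).trans (hbd z)) (abs_nonneg _)

theorem integrable_xec_mul_lamc (hxm : Measurable x) (hbd : ∀ y, ‖x y‖ ≤ M) (j : Fin (k + 1))
    (β : Fin (k + 1) → ℝ) (A : Set (ℝ × ℝ)) :
    Integrable (fun z => xec x j z * lamc x β z) (unifOn A) := by
  refine Integrable.of_bound ((measurable_xec x hxm j).mul
    (measurable_lamc x hxm β)).aestronglyMeasurable
    (max 1 M * Real.exp (|β 0| + ∑ i : Fin k, M * |β i.succ|)) (ae_of_all _ fun z => ?_)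
  rw [Real.norm_eq_abs, abs_mul, abs_of_pos (lamc_pos x β z)]
  exact mul_le_mul (abs_xec_le x hbd j z) (lamc_le x hbd β z) (Real.exp_pos _).le
    ((abs_nonneg _).trans (abs_xec_le x hbd j z))

end Covariates

theorem stmt_9_general {k : ℕ} (A : Set (ℝ × ℝ))
    (h0 : volume A ≠ 0) (hfin : volume A ≠ ⊤)
    (x : ℝ × ℝ → Fin k → ℝ) (hxm : Measurable x) (M : ℝ) (hbd : ∀ y, ‖x y‖ ≤ M)
    (β : Fin (k + 1) → ℝ) (n : ℕ) (y : ℕ → ℝ × ℝ)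
    {Ω : Type*} [MeasurableSpace Ω] (μ : Measure Ω) [IsProbabilityMeasure μ]
    (Y : ℕ → Ω → ℝ × ℝ) (hYmeas : ∀ i, Measurable (Y i))
    (hindep : iIndepFun Y μ)
    (hunif : ∀ i, Measure.map (Y i) μ = unifOn A)
    (j : Fin (k + 1)) :
    TendstoInMeasure μ
      (fun m ω =>
        (∑ i ∈ Finset.range n, xec x j (y i)) -
          ((volume A).toReal / m) *
            ((∑ i ∈ Finset.range n, xec x j (y i) * lamc x β (y i)) +
              ∑ i ∈ Finset.Ico n m, xec x j (Y i ω) * lamc x β (Y i ω)))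
      Filter.atTop
      (fun _ =>
        (∑ i ∈ Finset.range n, xec x j (y i)) -
          ∫ z in A, xec x j z * lamc x β z) := by
  set f : ℝ × ℝ → ℝ := fun z => xec x j z * lamc x β z
  have hf : Measurable f := (measurable_xec x hxm j).mul (measurable_lamc x hxm β)
  have hvol : (volume A).toReal ≠ 0 := ENNReal.toReal_ne_zero.2 ⟨h0, hfin⟩
  have hslln := ae_tendsto_sum_comp_div_of_iIndepFun hYmeas hindep hunif hf
    (integrable_xec_mul_lamc x hxm hbd j β A)
  have hsum_meas (m : ℕ) : Measurable fun ω => ∑ i ∈ Ico n m, f (Y i ω) :=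
    Finset.measurable_sum _ fun i _ => hf.comp (hYmeas i)
  refine tendstoInMeasure_of_tendsto_ae (fun m => ?_) ?_
  · exact ((((hsum_meas m).const_add _).const_mul _).const_sub _).aestronglyMeasurable
  filter_upwards [hslln] with ω hω
  rw [integral_unifOn] at hω
  have hlim := ((tendsto_const_add_sum_Ico_div
    (∑ i ∈ range n, f (y i)) n hω).const_mul (volume A).toReal).const_sub
      (∑ i ∈ range n, xec x j (y i))
  rw [mul_inv_cancel_left₀ hvol] at hlim
  exact hlim.congr fun m => by ring

/-- With presence points `y_1, …, y_n ∈ A` fixed and `Y_{n+1}, Y_{n+2}, …` i.i.d.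
uniform on `A`, the discretized score
`S_j^{(m)} = Σ_{i=1}^n x_j(y_i) − (|A|/m)(Σ_{i=1}^n x_j(y_i) λ_β(y_i) + Σ_{i=n+1}^m x_j(Y_i) λ_β(Y_i))`
converges in probability, as `m → ∞`, to
`Σ_{i=1}^n x_j(y_i) − ∫_A x_j(y) λ_β(y) dy`, the `j`-th score of the continuous
Poisson point-process log-likelihood. -/
theorem stmt_9 {k : ℕ} (A : Set (ℝ × ℝ)) (hA : MeasurableSet A)
    (h0 : volume A ≠ 0) (hfin : volume A ≠ ⊤)
    (x : ℝ × ℝ → Fin k → ℝ) (hxm : Measurable x) (M : ℝ) (hbd : ∀ y, ‖x y‖ ≤ M)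
    (β : Fin (k + 1) → ℝ) (n : ℕ) (y : ℕ → ℝ × ℝ) (hy : ∀ i < n, y i ∈ A)
    {Ω : Type*} [MeasurableSpace Ω] (μ : Measure Ω) [IsProbabilityMeasure μ]
    (Y : ℕ → Ω → ℝ × ℝ) (hYmeas : ∀ i, Measurable (Y i))
    (hindep : iIndepFun Y μ)
    (hunif : ∀ i, Measure.map (Y i) μ = unifOn A)
    (j : Fin (k + 1)) :
    TendstoInMeasure μ
      (fun m ω =>
        (∑ i ∈ Finset.range n, xec x j (y i)) -
          ((volume A).toReal / m) *
            ((∑ i ∈ Finset.range n, xec x j (y i) * lamc x β (y i)) +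
              ∑ i ∈ Finset.Ico n m, xec x j (Y i ω) * lamc x β (Y i ω)))
      Filter.atTop
      (fun _ =>
        (∑ i ∈ Finset.range n, xec x j (y i)) -
          ∫ z in A, xec x j z * lamc x β z) :=
  stmt_9_general A h0 hfin x hxm M hbd β n y μ Y hYmeas hindep hunif j
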